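/- Let m ≥ 1 be a natural number, r an integer, and s a complex number. With Γ_m(s) = π^{m(m−1)/4} · ∏_{i=0}^{m−1} Γ(s − i/2) and κ_m = (m+1)/2, the identity Γ_m(s) · Γ_m(κ_m − s) = (−1)^{m·r} · Γ_m(s + r) · Γ_m(κ_m − r − s) holds for every s ∈ ℂ. (This is the cross-multiplied form of Γ_m(s)/Γ_m(s+r) = (−1)^{mr} Γ_m(κ_m − r − s)/Γ_m(κ_m − s).) -/

import Mathlib

open Complex

/-- The Siegel Gamma factor `Γ_m(s) = π^{m(m-1)/4} · ∏_{i=0}^{m-1} Γ(s - i/2)`. -/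
noncomputable def GammaSiegel (m : ℕ) (s : ℂ) : ℂ :=
  (Real.pi : ℂ) ^ (((m * (m - 1) : ℕ) : ℂ) / 4) *
    ∏ i ∈ Finset.range m, Complex.Gamma (s - (i : ℂ) / 2)

/-
By the reflection formula `Γ(z) Γ(1 - z) = π / sin(π z)` (valid on all of `ℂ` with Mathlib's
junk value `Γ = 0` at the poles), the product `Γ(z) Γ(1 - z)` changes by the sign `(-1)^r` under
`z ↦ z + r`. Reversing the order of the factors of `Γ_m(κ_m - s)` turns them into `Γ(1 - (s - i/2))`,
so `Γ_m(s) Γ_m(κ_m - s)` is a constant times `∏_{i<m} Γ(s - i/2) Γ(1 - (s - i/2))`; shifting `s` by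
`r` multiplies it by `((-1)^r)^m = (-1)^{mr}`.
-/

namespace Complex

theorem Gamma_mul_Gamma_one_sub_add_int (z : ℂ) (r : ℤ) :
    Gamma (z + r) * Gamma (1 - (z + r)) = (-1) ^ r * (Gamma z * Gamma (1 - z)) := by
  have hsin : sin (Real.pi * (z + r)) = (-1) ^ r * sin (Real.pi * z) := by
    rw [mul_add, mul_comm (Real.pi : ℂ) r, ← Int.cast_negOnePow ℂ]
    exact sin_antiperiodic.add_int_mul_eq r
  have hsign : ((-1 : ℂ) ^ r)⁻¹ = (-1) ^ r := by
    rw [← inv_zpow, inv_neg, inv_one]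
  rw [Gamma_mul_Gamma_one_sub, Gamma_mul_Gamma_one_sub, hsin, div_mul_eq_div_div_swap,
    div_eq_mul_inv _ ((-1 : ℂ) ^ r), hsign, mul_comm]

end Complex

theorem Finset.prod_range_half_reflect {M : Type*} [CommMonoid M] (f : ℂ → M) (m : ℕ) (s : ℂ) :
    ∏ i ∈ Finset.range m, f (((m : ℂ) + 1) / 2 - s - (i : ℂ) / 2) =
      ∏ i ∈ Finset.range m, f (1 - (s - (i : ℂ) / 2)) := by
  rw [← Finset.prod_range_reflect]
  refine Finset.prod_congr rfl fun i hi => ?_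
  have him : i + 1 ≤ m := Finset.mem_range.mp hi
  rw [Nat.cast_sub (by omega), Nat.cast_sub (by omega)]
  push_cast
  ring_nf

theorem GammaSiegel_mul_GammaSiegel_reflect (m : ℕ) (s : ℂ) :
    GammaSiegel m s * GammaSiegel m (((m : ℂ) + 1) / 2 - s) =
      ((Real.pi : ℂ) ^ (((m * (m - 1) : ℕ) : ℂ) / 4)) ^ 2 *
        ∏ i ∈ Finset.range m, (Gamma (s - (i : ℂ) / 2) * Gamma (1 - (s - (i : ℂ) / 2))) := by
  rw [GammaSiegel, GammaSiegel, Finset.prod_range_half_reflect Gamma, Finset.prod_mul_distrib]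
  ring

theorem stmt_10 (m : ℕ) (r : ℤ) (s : ℂ) :
    GammaSiegel m s * GammaSiegel m (((m : ℂ) + 1) / 2 - s) =
      (-1 : ℂ) ^ ((m : ℤ) * r) * GammaSiegel m (s + (r : ℂ)) *
        GammaSiegel m (((m : ℂ) + 1) / 2 - (r : ℂ) - s) := by
  have hsign : (-1 : ℂ) ^ ((m : ℤ) * r) * ((-1) ^ r) ^ m = 1 := by
    rw [← zpow_natCast, ← zpow_mul, mul_comm r, ← zpow_add₀ (by norm_num), ← two_mul, zpow_mul]
    norm_num
  have hprod : ∏ i ∈ Finset.range m,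
        (Gamma (s + r - (i : ℂ) / 2) * Gamma (1 - (s + r - (i : ℂ) / 2))) =
      ((-1) ^ r) ^ m *
        ∏ i ∈ Finset.range m, (Gamma (s - (i : ℂ) / 2) * Gamma (1 - (s - (i : ℂ) / 2))) := by
    simp_rw [add_sub_right_comm s, Gamma_mul_Gamma_one_sub_add_int]
    rw [Finset.prod_mul_distrib, Finset.prod_const, Finset.card_range]
  rw [sub_sub, add_comm (r : ℂ), mul_assoc, GammaSiegel_mul_GammaSiegel_reflect,
    GammaSiegel_mul_GammaSiegel_reflect, hprod, mul_left_comm _ (((-1 : ℂ) ^ r) ^ m), ← mul_assoc, hsign, one_mul]
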